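/- arXiv:2111.06620 — 2 statements merged into one kernel-verified Lean document; each statement's English description precedes it below -/
import Mathlib

section
/- Let A be a random finite subset of a countable set E with E[|A|] ≤ a for some a > 0, let (X_e)_{e∈E} be complex-valued random variables with |X_e| ≤ 1 for all e, and suppose there exists c ∈ [-1,1] and b > 0 such that |X_e - c| ≤ b for all e. Then E[ |∏_{e∈A} c - ∏_{e∈A} X_e| ] ≤ 2√(2ab). -/
/-!
Pointwise, `‖cⁿ - ∏ X_e‖` is at most `2` (both products lie in the unit disc) and at most
`n b` (telescoping), where `n = |A|`. With `s = √(2ab)`, the minimum of the two is at most the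
affine function `s (n / a + 1)` of `n`, whose expectation is at most `2s`.
-/

open MeasureTheory

namespace Finset

variable {ι R : Type*} [NormedCommRing R] [NormOneClass R]

theorem norm_prod_le_one (s : Finset ι) {f : ι → R} (hf : ∀ i ∈ s, ‖f i‖ ≤ 1) :
    ‖∏ i ∈ s, f i‖ ≤ 1 :=
  (s.norm_prod_le f).trans (prod_le_one (fun _ _ => norm_nonneg _) hf)

theorem norm_prod_sub_prod_le_sum (s : Finset ι) {f g : ι → R}
    (hf : ∀ i ∈ s, ‖f i‖ ≤ 1) (hg : ∀ i ∈ s, ‖g i‖ ≤ 1) :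
    ‖∏ i ∈ s, f i - ∏ i ∈ s, g i‖ ≤ ∑ i ∈ s, ‖f i - g i‖ := by
  classical
  induction s using Finset.induction with
  | empty => simp
  | insert j s hj ih =>
    simp only [forall_mem_insert] at hf hg
    rw [prod_insert hj, prod_insert hj, sum_insert hj]
    have hfg : ‖∏ i ∈ s, f i - ∏ i ∈ s, g i‖ ≤ ∑ i ∈ s, ‖f i - g i‖ := ih hf.2 hg.2
    have hgs : ‖∏ i ∈ s, g i‖ ≤ 1 := s.norm_prod_le_one hg.2
    calc ‖f j * ∏ i ∈ s, f i - g j * ∏ i ∈ s, g i‖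
        = ‖f j * (∏ i ∈ s, f i - ∏ i ∈ s, g i) + (f j - g j) * ∏ i ∈ s, g i‖ := by
          congr 1; ring
      _ ≤ ‖f j‖ * ‖∏ i ∈ s, f i - ∏ i ∈ s, g i‖ + ‖f j - g j‖ * ‖∏ i ∈ s, g i‖ :=
          (norm_add_le _ _).trans (add_le_add (norm_mul_le _ _) (norm_mul_le _ _))
      _ ≤ 1 * ∑ i ∈ s, ‖f i - g i‖ + ‖f j - g j‖ * 1 := by gcongr; exact hf.1
      _ = ‖f j - g j‖ + ∑ i ∈ s, ‖f i - g i‖ := by ring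

theorem norm_prod_const_sub_prod_le_min (s : Finset ι) {c : R} {x : ι → R} {b : ℝ}
    (hc : ‖c‖ ≤ 1) (hx : ∀ i ∈ s, ‖x i‖ ≤ 1) (hxc : ∀ i ∈ s, ‖x i - c‖ ≤ b) :
    ‖∏ _i ∈ s, c - ∏ i ∈ s, x i‖ ≤ min 2 (#s * b) := by
  refine le_min ?_ ?_
  · calc ‖∏ _i ∈ s, c - ∏ i ∈ s, x i‖ ≤ ‖∏ _i ∈ s, c‖ + ‖∏ i ∈ s, x i‖ := norm_sub_le _ _
      _ ≤ 1 + 1 := add_le_add (s.norm_prod_le_one fun _ _ => hc) (s.norm_prod_le_one hx)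
      _ = 2 := one_add_one_eq_two
  · calc ‖∏ _i ∈ s, c - ∏ i ∈ s, x i‖ ≤ ∑ i ∈ s, ‖c - x i‖ :=
          s.norm_prod_sub_prod_le_sum (fun _ _ => hc) hx
      _ ≤ ∑ _i ∈ s, b := sum_le_sum fun i hi => norm_sub_rev c (x i) ▸ hxc i hi
      _ = #s * b := by rw [sum_const, nsmul_eq_mul]

end Finset

theorem min_two_mul_le_sqrt_mul {a b n : ℝ} (ha : 0 < a) (hb : 0 < b) (hn : 0 ≤ n) :
    min 2 (n * b) ≤ √(2 * a * b) * (n / a + 1) := by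
  set s := √(2 * a * b)
  have hs : 0 < s := Real.sqrt_pos.mpr (by positivity)
  have hs2 : s ^ 2 = 2 * a * b := Real.sq_sqrt (by positivity)
  rcases le_or_gt s (n * b) with hsn | hns
  · have h2a : 2 * a ≤ s * n := le_of_mul_le_mul_right
      (by rw [← hs2, sq, mul_assoc]; exact mul_le_mul_of_nonneg_left hsn hs.le) hb
    calc min 2 (n * b) ≤ 2 := min_le_left _ _
      _ ≤ s * n / a := (le_div_iff₀ ha).mpr h2a
      _ ≤ s * (n / a + 1) := by rw [mul_add, mul_div_assoc]; linarith
  · calc min 2 (n * b) ≤ n * b := min_le_right _ _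
      _ ≤ s := hns.le
      _ ≤ s * (n / a + 1) := le_mul_of_one_le_right hs.le (le_add_of_nonneg_left (by positivity))

theorem stmt_1_general {Ω E : Type*} [MeasurableSpace Ω]
    (μ : Measure Ω) [IsProbabilityMeasure μ]
    (A : Ω → Finset E) (X : E → Ω → ℂ)
    (a b c : ℝ) (ha : 0 < a) (hb : 0 < b)
    (hAint : Integrable (fun ω => ((A ω).card : ℝ)) μ)
    (hAa : ∫ ω, ((A ω).card : ℝ) ∂μ ≤ a)
    (hX1 : ∀ e ω, ‖X e ω‖ ≤ 1)
    (hc : c ∈ Set.Icc (-1 : ℝ) 1)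
    (hXc : ∀ e ω, ‖X e ω - (c : ℂ)‖ ≤ b) :
    ∫ ω, ‖(∏ _e ∈ A ω, (c : ℂ)) - ∏ e ∈ A ω, X e ω‖ ∂μ ≤
      2 * Real.sqrt (2 * a * b) := by
  set s := √(2 * a * b)
  by_cases hint : Integrable (fun ω => ‖(∏ _e ∈ A ω, (c : ℂ)) - ∏ e ∈ A ω, X e ω‖) μ
  swap
  · rw [integral_undef hint]; positivity
  have hcnorm : ‖(c : ℂ)‖ ≤ 1 := by rw [Complex.norm_real, Real.norm_eq_abs, abs_le]; exact hc
  have hpointwise : ∀ ω, ‖(∏ _e ∈ A ω, (c : ℂ)) - ∏ e ∈ A ω, X e ω‖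
      ≤ s * ((A ω).card / a + 1) := fun ω =>
    ((A ω).norm_prod_const_sub_prod_le_min hcnorm (fun e _ => hX1 e ω)
      (fun e _ => hXc e ω)).trans (min_two_mul_le_sqrt_mul ha hb (Nat.cast_nonneg _))
  calc ∫ ω, ‖(∏ _e ∈ A ω, (c : ℂ)) - ∏ e ∈ A ω, X e ω‖ ∂μ
      ≤ ∫ ω, s * ((A ω).card / a + 1) ∂μ :=
        integral_mono hint (((hAint.div_const a).add (integrable_const 1)).const_mul s) hpointwise
    _ = s * ((∫ ω, ((A ω).card : ℝ) ∂μ) / a + 1) := by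
        rw [integral_const_mul, integral_add (hAint.div_const a) (integrable_const 1),
          integral_div, integral_const, probReal_univ, one_smul]
    _ ≤ s * (a / a + 1) := by gcongr
    _ = 2 * s := by rw [div_self ha.ne']; ring

/-- Let `A` be a random finite subset of a countable set `E` with `𝔼[|A|] ≤ a` for some
`a > 0`, let `(X_e)_{e ∈ E}` be complex-valued random variables with `|X_e| ≤ 1`, and
suppose there is `c ∈ [-1, 1]` and `b > 0` with `|X_e - c| ≤ b` for all `e`.  Then
`𝔼[ |∏_{e ∈ A} c - ∏_{e ∈ A} X_e| ] ≤ 2√(2ab)`. -/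
theorem stmt_1 {Ω E : Type*} [Countable E] [MeasurableSpace Ω]
    (μ : Measure Ω) [IsProbabilityMeasure μ]
    (A : Ω → Finset E) (X : E → Ω → ℂ)
    (a b c : ℝ) (ha : 0 < a) (hb : 0 < b)
    (hAint : Integrable (fun ω => ((A ω).card : ℝ)) μ)
    (hAa : ∫ ω, ((A ω).card : ℝ) ∂μ ≤ a)
    (hX1 : ∀ e ω, ‖X e ω‖ ≤ 1)
    (hc : c ∈ Set.Icc (-1 : ℝ) 1)
    (hXc : ∀ e ω, ‖X e ω - (c : ℂ)‖ ≤ b) :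
    ∫ ω, ‖(∏ _e ∈ A ω, (c : ℂ)) - ∏ e ∈ A ω, X e ω‖ ∂μ ≤
      2 * Real.sqrt (2 * a * b) :=
  stmt_1_general μ A X a b c ha hb hAint hAa hX1 hc hXc
end

section
/- Every non-trivial G-valued k-form ω with finite support on the cell complex of ℤ^m can be written as ω = ω₁ + ⋯ + ω_j where each ω_i is non-trivial and irreducible, each ω_i ≤ ω, the ω_i have pairwise disjoint supports, and the dω_i have pairwise disjoint supports. -/
/-- An oriented cell of the cell complex of `ℤ^m`: a base point, a set of spanning
directions, and an orientation. -/
structure Cell (m : ℕ) where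
  base : Fin m → ℤ
  dirs : Finset (Fin m)
  sign : Bool

namespace Cell

/-- The cell with the opposite orientation. -/
def neg {m : ℕ} (c : Cell m) : Cell m := ⟨c.base, c.dirs, !c.sign⟩

/-- The dimension of a cell. -/
def dim {m : ℕ} (c : Cell m) : ℕ := c.dirs.card

/-- The cell lies in the box `B_N = [-N,N]^m`. -/
def inBox {m : ℕ} (N : ℕ) (c : Cell m) : Prop :=
  ∀ j, -(N : ℤ) ≤ c.base j ∧ c.base j + (if j ∈ c.dirs then 1 else 0) ≤ (N : ℤ)

/-- The cell is a boundary cell of the box `B_N`. -/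
def isBoundaryCell {m : ℕ} (N : ℕ) (c : Cell m) : Prop :=
  c.inBox N ∧ ∃ j, j ∉ c.dirs ∧ (c.base j = (N : ℤ) ∨ c.base j = -(N : ℤ))

end Cell

/-- The sign `±1` of an orientation. -/
def sgnz (b : Bool) : ℤ := if b then 1 else -1

theorem sgnz_not (b : Bool) : sgnz (!b) = -sgnz b := by cases b <;> simp [sgnz]

/-- Translation of a base point by a unit vector. -/
def shiftBase {m : ℕ} (a : Fin m → ℤ) (i : Fin m) : Fin m → ℤ :=
  fun j => a j + if j = i then 1 else 0

/-- The coefficient of the oriented cell `f` in the boundary chain `∂c` of the oriented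
cell `c`. -/
def bdryCoeff {m : ℕ} (c f : Cell m) : ℤ :=
  sgnz c.sign * sgnz f.sign *
    ∑ i ∈ c.dirs,
      (-1 : ℤ) ^ ((c.dirs.filter (fun j => j < i)).card) *
        ((if f.base = shiftBase c.base i ∧ f.dirs = c.dirs.erase i then 1 else 0) -
          (if f.base = c.base ∧ f.dirs = c.dirs.erase i then 1 else 0))

/-- The support of the coboundary `∂̂e` of a cell `e`: the set of cells having `e` in
their boundary with nonzero coefficient. -/
def cobSupp {m : ℕ} (e : Cell m) : Set (Cell m) := {p | bdryCoeff p e ≠ 0}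

/-- A `G`-valued `k`-form on the cell complex of `ℤ^m`: a `G`-valued function on oriented
cells, odd under orientation reversal and supported on cells of dimension `k`. -/
structure Form (m k : ℕ) (G : Type*) [AddCommGroup G] where
  val : Cell m → G
  odd : ∀ c, val c.neg = -val c
  graded : ∀ c, c.dim ≠ k → val c = 0

namespace Form

variable {m k : ℕ} {G : Type*} [AddCommGroup G]

/-- The discrete exterior derivative: `dω(c) = ω(∂c)`. -/
def d (ω : Form m k G) : Form m (k + 1) G where
  val c :=
    if c.dim = k + 1 then
      sgnz c.sign •
        ∑ i ∈ c.dirs,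
          (-1 : ℤ) ^ ((c.dirs.filter (fun j => j < i)).card) •
            (ω.val ⟨shiftBase c.base i, c.dirs.erase i, true⟩ -
              ω.val ⟨c.base, c.dirs.erase i, true⟩)
    else 0
  odd c := by
    simp only [Cell.neg, Cell.dim]
    by_cases h : c.dirs.card = k + 1
    · simp only [h, ↓reduceIte, sgnz_not, neg_zsmul]
    · simp only [h, ↓reduceIte, neg_zero]
  graded c h := if_neg h

/-- The support of a form. -/
def supp (ω : Form m k G) : Set (Cell m) := {c | ω.val c ≠ 0}

/-- The partial order on forms: `ω' ≤ ω` iff `ω' = ω|_{supp ω'}` and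
`dω' = (dω)|_{supp dω'}`. -/
def le (ω' ω : Form m k G) : Prop :=
  (∀ c, ω'.val c ≠ 0 → ω.val c = ω'.val c) ∧
  (∀ c, ω'.d.val c ≠ 0 → ω.d.val c = ω'.d.val c)

/-- Pointwise difference of forms. -/
def sub (ω ω' : Form m k G) : Form m k G where
  val c := ω.val c - ω'.val c
  odd c := by
    show ω.val c.neg - ω'.val c.neg = -(ω.val c - ω'.val c)
    rw [ω.odd, ω'.odd]; abel
  graded c h := by
    show ω.val c - ω'.val c = 0
    rw [ω.graded c h, ω'.graded c h, sub_zero]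

/-- A form is non-trivial if it is nonzero on some cell. -/
def Nontriv (ω : Form m k G) : Prop := ∃ c, ω.val c ≠ 0

/-- A form is irreducible if there is no non-trivial form strictly below it. -/
def IsIrreducible (ω : Form m k G) : Prop :=
  ¬∃ ω' : Form m k G, ω'.Nontriv ∧ ω'.le ω ∧ ω' ≠ ω

end Form

/-!
If `ω` is not irreducible, some non-trivial `ω' ≤ ω` with `ω' ≠ ω` splits it as
`ω = ω' + (ω - ω')`. Since `ω'` agrees with `ω` on its support and `dω'` agrees with `dω` on
its support, the complement `ω - ω'` is again `≤ ω`, and the two pieces have disjoint supports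
and disjoint derivative supports. Both pieces have strictly smaller support than `ω`, so
induction on the size of the support decomposes them, and the two decompositions combine.
-/

namespace Form

variable {m k : ℕ} {G : Type*} [AddCommGroup G]

theorem ext {ω ω' : Form m k G} (h : ∀ c, ω.val c = ω'.val c) : ω = ω' := by
  cases ω; cases ω'
  simpa only [Form.mk.injEq] using funext h

@[simp]
theorem sub_val (ω ω' : Form m k G) (c : Cell m) : (ω.sub ω').val c = ω.val c - ω'.val c :=
  rfl

@[simp]
theorem mem_supp {ω : Form m k G} {c : Cell m} : c ∈ ω.supp ↔ ω.val c ≠ 0 :=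
  Iff.rfl

theorem d_sub (ω ω' : Form m k G) : (ω.sub ω').d = ω.d.sub ω'.d := by
  refine ext fun c => ?_
  simp only [d, sub_val]
  split_ifs
  · simp only [← smul_sub, ← Finset.sum_sub_distrib]
    congr 1
    refine Finset.sum_congr rfl fun i _ => ?_
    congr 1
    abel
  · rw [sub_zero]

protected theorem le_refl (ω : Form m k G) : ω.le ω :=
  ⟨fun _ _ => rfl, fun _ _ => rfl⟩

protected theorem le_trans {a b c : Form m k G} (hab : a.le b) (hbc : b.le c) : a.le c :=
  ⟨fun x hx => by rw [hbc.1 x (by rwa [hab.1 x hx]), hab.1 x hx],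
    fun x hx => by rw [hbc.2 x (by rwa [hab.2 x hx]), hab.2 x hx]⟩

theorem supp_subset_of_le {a b : Form m k G} (h : a.le b) : a.supp ⊆ b.supp :=
  fun c hc => by rwa [mem_supp, h.1 c hc]

theorem d_supp_subset_of_le {a b : Form m k G} (h : a.le b) : a.d.supp ⊆ b.d.supp :=
  fun c hc => by rwa [mem_supp, h.2 c hc]

section Complement

variable {ω ω' : Form m k G}

theorem sub_val_eq_zero (h : ω'.le ω) {c : Cell m} (hc : ω'.val c ≠ 0) :
    (ω.sub ω').val c = 0 := by
  rw [sub_val, h.1 c hc, sub_self]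

theorem d_sub_val_eq_zero (h : ω'.le ω) {c : Cell m} (hc : ω'.d.val c ≠ 0) :
    (ω.sub ω').d.val c = 0 := by
  rw [d_sub, sub_val, h.2 c hc, sub_self]

theorem disjoint_supp_sub (h : ω'.le ω) : Disjoint ω'.supp (ω.sub ω').supp :=
  Set.disjoint_left.2 fun _ hc hc' => hc' (sub_val_eq_zero h hc)

theorem disjoint_d_supp_sub (h : ω'.le ω) : Disjoint ω'.d.supp (ω.sub ω').d.supp :=
  Set.disjoint_left.2 fun _ hc hc' => hc' (d_sub_val_eq_zero h hc)

theorem sub_le (h : ω'.le ω) : (ω.sub ω').le ω := by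
  refine ⟨fun c hc => ?_, fun c hc => ?_⟩
  · have : ω'.val c = 0 := by_contra fun h' => hc (sub_val_eq_zero h h')
    rw [sub_val, this, sub_zero]
  · have : ω'.d.val c = 0 := by_contra fun h' => hc (d_sub_val_eq_zero h h')
    rw [d_sub, sub_val, this, sub_zero]

theorem nontriv_sub_of_ne (h : ω' ≠ ω) : (ω.sub ω').Nontriv := by
  by_contra hzero
  exact h (ext fun c => (sub_eq_zero.1 (not_not.1 fun hc => hzero ⟨c, hc⟩)).symm)

end Complement

theorem supp_ssubset_of_le {ω a b : Form m k G} (ha : a.le ω) (hb : b.le ω)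
    (hab : Disjoint a.supp b.supp) (hb' : b.Nontriv) : a.supp ⊂ ω.supp := by
  obtain ⟨c, hc⟩ := hb'
  exact (Set.ssubset_iff_of_subset (supp_subset_of_le ha)).2
    ⟨c, supp_subset_of_le hb hc, Set.disjoint_right.1 hab hc⟩

structure IsIrreducibleDecomposition (ω : Form m k G) (s : Finset (Form m k G)) : Prop where
  nontriv : ∀ f ∈ s, f.Nontriv
  irreducible : ∀ f ∈ s, f.IsIrreducible
  le : ∀ f ∈ s, f.le ω
  pairwiseDisjoint_supp : (s : Set (Form m k G)).PairwiseDisjoint supp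
  pairwiseDisjoint_d_supp : (s : Set (Form m k G)).PairwiseDisjoint fun f => f.d.supp
  val_eq_sum : ∀ c, ω.val c = ∑ f ∈ s, f.val c

namespace IsIrreducibleDecomposition

theorem empty {ω : Form m k G} (h : ¬ω.Nontriv) : IsIrreducibleDecomposition ω ∅ where
  nontriv := by simp
  irreducible := by simp
  le := by simp
  pairwiseDisjoint_supp := by simp
  pairwiseDisjoint_d_supp := by simp
  val_eq_sum c := by simpa using not_exists_not.1 h c

theorem singleton {ω : Form m k G} (hnt : ω.Nontriv) (hirr : ω.IsIrreducible) :
    IsIrreducibleDecomposition ω {ω} where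
  nontriv := by simpa using hnt
  irreducible := by simpa using hirr
  le := by simpa using ω.le_refl
  pairwiseDisjoint_supp := by simp
  pairwiseDisjoint_d_supp := by simp
  val_eq_sum c := by simp

open Classical in
theorem union {ω ω₁ ω₂ : Form m k G} {s₁ s₂ : Finset (Form m k G)}
    (h₁ : IsIrreducibleDecomposition ω₁ s₁) (h₂ : IsIrreducibleDecomposition ω₂ s₂)
    (hle₁ : ω₁.le ω) (hle₂ : ω₂.le ω) (hsupp : Disjoint ω₁.supp ω₂.supp)
    (hd : Disjoint ω₁.d.supp ω₂.d.supp) (hval : ∀ c, ω.val c = ω₁.val c + ω₂.val c) :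
    IsIrreducibleDecomposition ω (s₁ ∪ s₂) := by
  have hdisj : Disjoint s₁ s₂ := Finset.disjoint_left.2 fun f hf₁ hf₂ => by
    obtain ⟨c, hc⟩ := h₁.nontriv f hf₁
    exact Set.disjoint_left.1 hsupp (supp_subset_of_le (h₁.le f hf₁) hc)
      (supp_subset_of_le (h₂.le f hf₂) hc)
  refine ⟨?_, ?_, ?_, ?_, ?_, fun c => ?_⟩
  · simpa [or_imp, forall_and] using ⟨h₁.nontriv, h₂.nontriv⟩
  · simpa [or_imp, forall_and] using ⟨h₁.irreducible, h₂.irreducible⟩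
  · simpa [or_imp, forall_and] using
      ⟨fun f hf => Form.le_trans (h₁.le f hf) hle₁,
        fun f hf => Form.le_trans (h₂.le f hf) hle₂⟩
  · rw [Finset.coe_union]
    exact h₁.pairwiseDisjoint_supp.union h₂.pairwiseDisjoint_supp fun f hf g hg _ =>
      hsupp.mono (supp_subset_of_le (h₁.le f hf)) (supp_subset_of_le (h₂.le g hg))
  · rw [Finset.coe_union]
    exact h₁.pairwiseDisjoint_d_supp.union h₂.pairwiseDisjoint_d_supp fun f hf g hg _ =>
      hd.mono (d_supp_subset_of_le (h₁.le f hf)) (d_supp_subset_of_le (h₂.le g hg))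
  · rw [Finset.sum_union hdisj, hval, h₁.val_eq_sum, h₂.val_eq_sum]

end IsIrreducibleDecomposition

theorem exists_isIrreducibleDecomposition (ω : Form m k G) (hfin : ω.supp.Finite) :
    ∃ s, IsIrreducibleDecomposition ω s := by
  induction hn : ω.supp.ncard using Nat.strong_induction_on generalizing ω with
  | _ n ih =>
  by_cases hnt : ω.Nontriv
  swap
  · exact ⟨∅, .empty hnt⟩
  by_cases hirr : ω.IsIrreducible
  · exact ⟨{ω}, .singleton hnt hirr⟩
  obtain ⟨ω', hnt', hle, hne⟩ := not_not.1 hirr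
  have hle' := sub_le hle
  have hdisj := disjoint_supp_sub hle
  have hlt₁ : ω'.supp ⊂ ω.supp := supp_ssubset_of_le hle hle' hdisj (nontriv_sub_of_ne hne)
  have hlt₂ : (ω.sub ω').supp ⊂ ω.supp := supp_ssubset_of_le hle' hle hdisj.symm hnt'
  obtain ⟨s₁, h₁⟩ :=
    ih _ (hn ▸ Set.ncard_lt_ncard hlt₁ hfin) ω' (hfin.subset hlt₁.subset) rfl
  obtain ⟨s₂, h₂⟩ :=
    ih _ (hn ▸ Set.ncard_lt_ncard hlt₂ hfin) _ (hfin.subset hlt₂.subset) rfl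
  exact ⟨_, h₁.union h₂ hle hle' hdisj (disjoint_d_supp_sub hle) fun c => by simp⟩

end Form

/-- Every non-trivial `G`-valued `k`-form `ω` with finite support on the cell complex of
`ℤ^m` can be written as `ω = ω₁ + ⋯ + ω_j` where each `ω_i` is non-trivial and
irreducible, each `ω_i ≤ ω`, the `ω_i` have pairwise disjoint supports, and the `dω_i`
have pairwise disjoint supports. -/
theorem stmt_11 {m k : ℕ} {G : Type*} [AddCommGroup G]
    (ω : Form m k G) (hnt : ω.Nontriv) (hfin : ω.supp.Finite) :
    ∃ (j : ℕ) (f : Fin j → Form m k G), 1 ≤ j ∧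
      (∀ i, (f i).Nontriv ∧ (f i).IsIrreducible) ∧
      (∀ i, (f i).le ω) ∧
      (∀ i i', i ≠ i' → (f i).supp ∩ (f i').supp = ∅) ∧
      (∀ c, ω.val c = ∑ i, (f i).val c) ∧
      (∀ i i', i ≠ i' → (f i).d.supp ∩ (f i').d.supp = ∅) := by
  obtain ⟨s, hs⟩ := ω.exists_isIrreducibleDecomposition hfin
  let f : Fin s.card → Form m k G := fun i => s.equivFin.symm i
  have hf_mem : ∀ i, f i ∈ s := fun i => (s.equivFin.symm i).2
  have hf_ne : ∀ i i', i ≠ i' → f i ≠ f i' := fun i i' h =>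
    Subtype.coe_injective.ne (s.equivFin.symm.injective.ne h)
  have hs_ne : s.Nonempty := by
    obtain ⟨c, hc⟩ := hnt
    by_contra! hempty
    exact hc (by simpa [hempty] using hs.val_eq_sum c)
  refine ⟨s.card, f, hs_ne.card_pos,
    fun i => ⟨hs.nontriv _ (hf_mem i), hs.irreducible _ (hf_mem i)⟩,
    fun i => hs.le _ (hf_mem i), fun i i' h => ?_, fun c => ?_, fun i i' h => ?_⟩
  · exact Set.disjoint_iff_inter_eq_empty.1
      (hs.pairwiseDisjoint_supp (hf_mem i) (hf_mem i') (hf_ne i i' h))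
  · rw [hs.val_eq_sum c, ← Finset.sum_coe_sort s]
    exact (Equiv.sum_comp s.equivFin.symm fun x : s => (x : Form m k G).val c).symm
  · exact Set.disjoint_iff_inter_eq_empty.1
      (hs.pairwiseDisjoint_d_supp (hf_mem i) (hf_mem i') (hf_ne i i' h))
end
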